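/- The bodyguard number is not monotone with respect to connected subgraphs: there exists a graph G with a connected subgraph H such that B(H) > B(G). -/

import Mathlib

open SimpleGraph

/-- A token may stay in place or move along an edge. -/
def stepRel {V : Type*} (G : SimpleGraph V) (x y : V) : Prop := x = y ∨ G.Adj x y

/-- The sequence of positions in the pursuit game: `(gamePlay ...) n` is the pair
(pursuer positions, evader position) after `n` full rounds; at time `0` the pursuers
have been placed (`binit`) and then the evader placed (`pinit binit`). In each round,
the pursuers move first (via `bmove`, seeing the current state), then the evader moves
(via `pmove`, seeing the pursuers' new positions and his own position). -/
def gamePlay {V : Type*} {k : ℕ} (binit : Fin k → V) (bmove : (Fin k → V) → V → Fin k → V)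
    (pinit : (Fin k → V) → V) (pmove : (Fin k → V) → V → V) : ℕ → (Fin k → V) × V
  | 0 => (binit, pinit binit)
  | n + 1 =>
      let s := gamePlay binit bmove pinit pmove n
      (bmove s.1 s.2, pmove (bmove s.1 s.2) s.2)

/-- `k` bodyguards have a winning strategy on `G`: they can place themselves and move so
that, against every president strategy, after finitely many rounds they occupy the whole
open neighbourhood of the president's vertex at the end of every bodyguard turn. -/
def BodyguardsWin {V : Type*} (G : SimpleGraph V) (k : ℕ) : Prop :=
  ∃ (binit : Fin k → V) (bmove : (Fin k → V) → V → Fin k → V),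
    (∀ bs p i, stepRel G (bs i) (bmove bs p i)) ∧
    ∀ (pinit : (Fin k → V) → V) (pmove : (Fin k → V) → V → V),
      (∀ bs p, stepRel G p (pmove bs p)) →
      ∃ N, ∀ n, N ≤ n →
        ∀ v, G.Adj (gamePlay binit bmove pinit pmove n).2 v →
          ∃ i, (gamePlay binit bmove pinit pmove (n + 1)).1 i = v

/-- The bodyguard number of a finite graph. -/
noncomputable def bodyguardNumber {V : Type*} (G : SimpleGraph V) [Fintype V] : ℕ :=
  sInf {k | BodyguardsWin G k}

/-- `k` cops have a winning strategy in classic Cops and Robber on `G`: at some point a cop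
occupies the same vertex as the robber (either right after a cop move, or at the end of a
round). -/
def CopsWin {V : Type*} (G : SimpleGraph V) (k : ℕ) : Prop :=
  ∃ (cinit : Fin k → V) (cmove : (Fin k → V) → V → Fin k → V),
    (∀ cs r i, stepRel G (cs i) (cmove cs r i)) ∧
    ∀ (rinit : (Fin k → V) → V) (rmove : (Fin k → V) → V → V),
      (∀ cs r, stepRel G r (rmove cs r)) →
      ∃ n i, (gamePlay cinit cmove rinit rmove (n + 1)).1 i =
                (gamePlay cinit cmove rinit rmove n).2 ∨
             (gamePlay cinit cmove rinit rmove n).1 i =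
                (gamePlay cinit cmove rinit rmove n).2

/-- The cop number of a finite graph. -/
noncomputable def copNumber {V : Type*} (G : SimpleGraph V) [Fintype V] : ℕ :=
  sInf {k | CopsWin G k}

/-! On the 2×3 grid, three bodyguards suffice: guard `i` patrols column `i`, which is an edge, and
every open neighbourhood in the grid meets each column at most once. Its spanning double star
(centres `x`, `y`, with pendants `u₁, u₂` at `x` and `w₁, w₂` at `y`) needs four: if the president
oscillates along `xy`, then at some moment the guards sit on `u₁, u₂` and one move later on
`w₁, w₂`, and no guard can make it from `{u₁, u₂}` to `{w₁, w₂}` in one step. -/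

open Finset

instance {V : Type*} [DecidableEq V] (G : SimpleGraph V) [DecidableRel G.Adj] :
    DecidableRel (stepRel G) :=
  fun x y => inferInstanceAs (Decidable (x = y ∨ G.Adj x y))

section Bodyguards

variable {V : Type*} {G : SimpleGraph V} {k : ℕ}

theorem bodyguardsWin_of_surjective {binit : Fin k → V} (h : Function.Surjective binit) :
    BodyguardsWin G k := by
  refine ⟨binit, fun bs _ => bs, fun _ _ _ => Or.inl rfl, fun pinit pmove _ => ⟨0, ?_⟩⟩
  have hstay : ∀ n, (gamePlay binit (fun bs _ => bs) pinit pmove n).1 = binit := by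
    intro n
    induction n with
    | zero => rfl
    | succ n ih => exact ih
  intro n _ v _
  simpa only [hstay] using h v

theorem bodyguardsWin_card [Fintype V] : BodyguardsWin G (Fintype.card V) :=
  bodyguardsWin_of_surjective (Fintype.equivFin V).symm.surjective

theorem bodyguardNumber_le [Fintype V] (h : BodyguardsWin G k) : bodyguardNumber G ≤ k :=
  Nat.sInf_le h

theorem le_bodyguardNumber [Fintype V] {m : ℕ} (h : ∀ k, BodyguardsWin G k → m ≤ k) :
    m ≤ bodyguardNumber G :=
  le_csInf ⟨_, bodyguardsWin_card⟩ h

/-- Guard `i` patrols the fibre `col ⁻¹' {i}`: while standing in it, it moves to the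
neighbour of the president lying in that fibre, if there is one. -/
theorem bodyguardsWin_of_cliquePartition (col : V → Fin k) (s : Fin k → V)
    (hs : ∀ i, col (s i) = i) (hclique : ∀ u v, col u = col v → stepRel G u v)
    (hinj : ∀ p u v, G.Adj p u → G.Adj p v → col u = col v → u = v) :
    BodyguardsWin G k := by
  classical
  let target : V → Fin k → V := fun p i =>
    if h : ∃ v, G.Adj p v ∧ col v = i then h.choose else s i
  have target_col : ∀ p i, col (target p i) = i := by
    intro p i
    by_cases h : ∃ v, G.Adj p v ∧ col v = i
    · simpa only [target, dif_pos h] using h.choose_spec.2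
    · simpa only [target, dif_neg h] using hs i
  have target_col_eq : ∀ p v, G.Adj p v → target p (col v) = v := by
    intro p v hv
    have h : ∃ w, G.Adj p w ∧ col w = col v := ⟨v, hv, rfl⟩
    simp only [target, dif_pos h]
    exact hinj p _ _ h.choose_spec.1 hv h.choose_spec.2
  let bmove : (Fin k → V) → V → Fin k → V := fun bs p i =>
    if col (bs i) = i then target p i else bs i
  refine ⟨s, bmove, ?_, fun pinit pmove _ => ⟨0, fun n _ v hv => ⟨col v, ?_⟩⟩⟩
  · intro bs p i
    by_cases h : col (bs i) = i
    · simpa only [bmove, if_pos h] using hclique _ _ (h.trans (target_col p i).symm)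
    · simp only [bmove, if_neg h]
      exact Or.inl rfl
  · have hpatrol : ∀ m i, col ((gamePlay s bmove pinit pmove m).1 i) = i := by
      intro m
      induction m with
      | zero => exact hs
      | succ m ih =>
        intro i
        change col (bmove _ _ i) = i
        simpa only [bmove, if_pos (ih i)] using target_col _ i
    change bmove _ _ (col v) = v
    simpa only [bmove, if_pos (hpatrol n _)] using target_col_eq _ v hv

theorem BodyguardsWin.exists_covers_of_adj (h : BodyguardsWin G k) {x y : V} (hxy : G.Adj x y) :
    ∃ bs bs' : Fin k → V, (∀ i, stepRel G (bs i) (bs' i)) ∧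
      (∀ v, G.Adj x v → ∃ i, bs i = v) ∧ (∀ v, G.Adj y v → ∃ i, bs' i = v) := by
  classical
  obtain ⟨binit, bmove, hstep, hwin⟩ := h
  have hswap : ∀ p, stepRel G p (Equiv.swap x y p) := by
    intro p
    rcases eq_or_ne p x with rfl | hx
    · exact Or.inr (by simpa using hxy)
    rcases eq_or_ne p y with rfl | hy
    · exact Or.inr (by simpa using hxy.symm)
    · exact Or.inl (Equiv.swap_apply_of_ne_of_ne hx hy).symm
  obtain ⟨N, hN⟩ := hwin (fun _ => x) (fun _ => Equiv.swap x y) (fun _ => hswap)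
  set play := gamePlay binit bmove (fun _ => x) (fun _ => Equiv.swap x y)
  have hnext : ∀ n, (play (n + 1)).2 = Equiv.swap x y (play n).2 := fun _ => rfl
  have heven : ∀ m, (play (2 * m)).2 = x := by
    intro m
    induction m with
    | zero => rfl
    | succ m ih => rw [show 2 * (m + 1) = 2 * m + 1 + 1 by ring, hnext, hnext, ih]; simp
  have hodd : ∀ m, (play (2 * m + 1)).2 = y := by
    intro m
    rw [hnext, heven, Equiv.swap_apply_left]
  refine ⟨(play (2 * N + 1)).1, (play (2 * N + 2)).1, fun i => hstep _ _ i, ?_, ?_⟩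
  · simpa only [heven] using hN (2 * N) (by omega)
  · simpa only [hodd] using hN (2 * N + 1) (by omega)

theorem card_add_card_le_of_forall_rel {R : V → V → Prop} {bs bs' : Fin k → V}
    (hR : ∀ i, R (bs i) (bs' i)) {A B : Finset V} (hA : ∀ a ∈ A, ∃ i, bs i = a)
    (hB : ∀ b ∈ B, ∃ i, bs' i = b) (hAB : ∀ a ∈ A, ∀ b ∈ B, ¬ R a b) : #A + #B ≤ k := by
  classical
  let I : Finset (Fin k) := {i | bs i ∈ A}
  let J : Finset (Fin k) := {i | bs' i ∈ B}
  have hAI : #A ≤ #I := card_le_card_of_surjOn bs fun a ha => by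
    obtain ⟨i, rfl⟩ := hA a ha
    exact ⟨i, by simpa [I] using ha, rfl⟩
  have hBJ : #B ≤ #J := card_le_card_of_surjOn bs' fun b hb => by
    obtain ⟨i, rfl⟩ := hB b hb
    exact ⟨i, by simpa [J] using hb, rfl⟩
  have hIJ : Disjoint I J := disjoint_filter.2 fun i _ ha hb => hAB _ ha _ hb (hR i)
  calc #A + #B ≤ #I + #J := add_le_add hAI hBJ
    _ = #(I ∪ J) := (card_union_of_disjoint hIJ).symm
    _ ≤ k := (card_le_univ _).trans_eq (Fintype.card_fin k)

theorem BodyguardsWin.card_add_card_le (h : BodyguardsWin G k) {x y : V} (hxy : G.Adj x y)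
    {A B : Finset V} (hA : ∀ a ∈ A, G.Adj x a) (hB : ∀ b ∈ B, G.Adj y b)
    (hAB : ∀ a ∈ A, ∀ b ∈ B, ¬ stepRel G a b) : #A + #B ≤ k := by
  obtain ⟨bs, bs', hstep, hx, hy⟩ := h.exists_covers_of_adj hxy
  exact card_add_card_le_of_forall_rel hstep (fun a ha => hx a (hA a ha))
    (fun b hb => hy b (hB b hb)) hAB

end Bodyguards

/-- The 2×3 grid, with rows `0, 1, 2` and `3, 4, 5`. -/
def grid : SimpleGraph (Fin 6) :=
  fromEdgeSet {s(0, 1), s(1, 2), s(3, 4), s(4, 5), s(0, 3), s(1, 4), s(2, 5)}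

def doubleStar : SimpleGraph (Fin 6) :=
  fromEdgeSet {s(0, 1), s(1, 2), s(1, 4), s(3, 4), s(4, 5)}

instance : DecidableRel grid.Adj := by unfold grid; infer_instance

instance : DecidableRel doubleStar.Adj := by unfold doubleStar; infer_instance

theorem doubleStar_le_grid : doubleStar ≤ grid :=
  fromEdgeSet_mono <| by
    simp only [Set.insert_subset_iff, Set.mem_insert_iff, Set.mem_singleton_iff]
    tauto

theorem doubleStar_connected : doubleStar.Connected := by decide

theorem bodyguardNumber_grid_le : bodyguardNumber grid ≤ 3 :=
  bodyguardNumber_le <|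
    bodyguardsWin_of_cliquePartition (fun v => ⟨v % 3, by omega⟩) ![0, 1, 2]
      (by decide) (by decide) (by decide)

theorem four_le_bodyguardNumber_doubleStar : 4 ≤ bodyguardNumber doubleStar :=
  le_bodyguardNumber fun _ h =>
    h.card_add_card_le (x := 1) (y := 4) (A := {0, 2}) (B := {3, 5})
      (by decide) (by decide) (by decide) (by decide)

/-- The bodyguard number is not monotone with respect to connected subgraphs: there is a
graph `G` with a connected subgraph `H` such that `B(H) > B(G)`. -/
theorem exists_connected_subgraph_bodyguardNumber_gt :
    ∃ (G H : SimpleGraph (Fin 6)), H ≤ G ∧ H.Connected ∧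
      bodyguardNumber G < bodyguardNumber H :=
  ⟨grid, doubleStar, doubleStar_le_grid, doubleStar_connected,
    bodyguardNumber_grid_le.trans_lt four_le_bodyguardNumber_doubleStar⟩
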